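/- Let c be an immersed closed curve and p, q ∈ ℝ with p > 0 and 3p + q·ℓ_c ≠ 0 (p and q play the roles of Φ(ℓ_c) and Φ'(ℓ_c) for a length weight Φ; the condition 3Φ(ℓ) + Φ'(ℓ)·ℓ ≠ 0 excludes exactly the scale-invariant weights Φ(ℓ) = C·ℓ^{−3}). Then for every direction h: Ω^{Φ(ℓ)}(h,k) = 0 for every direction k if and only if c'(θ) × h(θ) = 0 for all θ. Thus the kernel of the length-weighted presymplectic form Ω^{Φ(ℓ)} at c consists exactly of the vertical vectors a·c', so Ω^{Φ(ℓ)} induces a weakly non-degenerate (symplectic) form on the space of unparametrized curves. -/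

import Mathlib

noncomputable section

open Real

/-- Points of `ℝ³`. -/
abbrev V3 := Fin 3 → ℝ

/-- Euclidean inner product on `ℝ³`. -/
def dot3 (u v : V3) : ℝ := u 0 * v 0 + u 1 * v 1 + u 2 * v 2

/-- Cross product on `ℝ³`. -/
def cross3 (u v : V3) : V3 :=
  ![u 1 * v 2 - u 2 * v 1, u 2 * v 0 - u 0 * v 2, u 0 * v 1 - u 1 * v 0]

/-- Euclidean norm on `ℝ³`. -/
def norm3 (u : V3) : ℝ := Real.sqrt (dot3 u u)

/-- A closed curve: a smooth `2π`-periodic map `ℝ → ℝ³`. -/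
def IsClosedCurve (c : ℝ → V3) : Prop :=
  ContDiff ℝ (⊤ : ℕ∞) c ∧ ∀ θ, c (θ + 2 * π) = c θ

/-- An immersed closed curve: `c'(θ) ≠ 0` for all `θ`. -/
def IsImmersed (c : ℝ → V3) : Prop :=
  IsClosedCurve c ∧ ∀ θ, deriv c θ ≠ 0

/-- A direction (tangent vector): a smooth `2π`-periodic map `ℝ → ℝ³`. -/
def IsDirection (h : ℝ → V3) : Prop :=
  ContDiff ℝ (⊤ : ℕ∞) h ∧ ∀ θ, h (θ + 2 * π) = h θ

/-- Arc-length derivative along `c`: `D_s h = h'/|c'|`. -/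
def Ds (c h : ℝ → V3) : ℝ → V3 := fun θ => (norm3 (deriv c θ))⁻¹ • deriv h θ

/-- The unit tangent `T = D_s c = c'/|c'|`. -/
def unitT (c : ℝ → V3) : ℝ → V3 := Ds c c

/-- `D_s² c = D_s (D_s c)`. -/
def Ds2c (c : ℝ → V3) : ℝ → V3 := Ds c (Ds c c)

/-- Arc-length integral `∫ f ds = ∫₀^{2π} f(θ) |c'(θ)| dθ`. -/
def arcInt (c : ℝ → V3) (f : ℝ → ℝ) : ℝ :=
  ∫ θ in (0:ℝ)..(2 * π), f θ * norm3 (deriv c θ)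

/-- `L²(ds)` pairing `⟨f,g⟩_{L²} = ∫ ⟨f,g⟩ ds`. -/
def L2 (c f g : ℝ → V3) : ℝ := arcInt c (fun θ => dot3 (f θ) (g θ))

/-- Length `ℓ_c = ∫₀^{2π} |c'(θ)| dθ`. -/
def curveLen (c : ℝ → V3) : ℝ := ∫ θ in (0:ℝ)..(2 * π), norm3 (deriv c θ)

/-- The Liouville one-form for `L = id`: `Θ(c,h) = ∫₀^{2π} ⟨c × c', h⟩ dθ`. -/
def Theta (c h : ℝ → V3) : ℝ :=
  ∫ θ in (0:ℝ)..(2 * π), dot3 (cross3 (c θ) (deriv c θ)) (h θ)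

/-- The squared curvature `κ² = |D_s² c|²`. -/
def kappaSq (c : ℝ → V3) (θ : ℝ) : ℝ := dot3 (Ds2c c θ) (Ds2c c θ)

/-- The length-weighted presymplectic form at `c`, where `p` and `q` play the roles of
`Φ(ℓ_c)` and `Φ'(ℓ_c)`:
`Ω^{Φ(ℓ)}(h,k) = 3p ∫₀^{2π} ⟨c'×h,k⟩ dθ + q((∫⟨h,D_s²c⟩ds)Θ(c,k) − (∫⟨k,D_s²c⟩ds)Θ(c,h))`. -/
def OmegaPhi (c : ℝ → V3) (p q : ℝ) (h k : ℝ → V3) : ℝ :=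
  3 * p * (∫ θ in (0:ℝ)..(2 * π), dot3 (cross3 (deriv c θ) (h θ)) (k θ))
    + q * (arcInt c (fun θ => dot3 (h θ) (Ds2c c θ)) * Theta c k
         - arcInt c (fun θ => dot3 (k θ) (Ds2c c θ)) * Theta c h)

/-! ### Auxiliary algebra on `V3` -/

lemma dot3_nonneg (u : V3) : 0 ≤ dot3 u u := by
  unfold dot3; nlinarith [mul_self_nonneg (u 0), mul_self_nonneg (u 1), mul_self_nonneg (u 2)]

lemma dot3_eq_zero_iff (u : V3) : dot3 u u = 0 ↔ u = 0 := by
  constructor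
  · intro h
    unfold dot3 at h
    have h0 : u 0 * u 0 = 0 := by
      nlinarith [mul_self_nonneg (u 1), mul_self_nonneg (u 2), mul_self_nonneg (u 0)]
    have h1 : u 1 * u 1 = 0 := by
      nlinarith [mul_self_nonneg (u 1), mul_self_nonneg (u 2), mul_self_nonneg (u 0)]
    have h2 : u 2 * u 2 = 0 := by
      nlinarith [mul_self_nonneg (u 1), mul_self_nonneg (u 2), mul_self_nonneg (u 0)]
    funext i
    fin_cases i
    · exact mul_self_eq_zero.mp h0
    · exact mul_self_eq_zero.mp h1
    · exact mul_self_eq_zero.mp h2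
  · intro h; subst h; simp [dot3]

lemma dot3_pos (u : V3) (hu : u ≠ 0) : 0 < dot3 u u :=
  lt_of_le_of_ne (dot3_nonneg u) (fun h => hu ((dot3_eq_zero_iff u).mp h.symm))

lemma norm3_sq (u : V3) : norm3 u * norm3 u = dot3 u u :=
  Real.mul_self_sqrt (dot3_nonneg u)

lemma norm3_pos (u : V3) (hu : u ≠ 0) : 0 < norm3 u :=
  Real.sqrt_pos.mpr (dot3_pos u hu)

lemma smul3_apply (a : ℝ) (u : V3) (i : Fin 3) : (a • u) i = a * u i := rfl

lemma cross3_apply0 (u v : V3) : cross3 u v 0 = u 1 * v 2 - u 2 * v 1 := rfl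
lemma cross3_apply1 (u v : V3) : cross3 u v 1 = u 2 * v 0 - u 0 * v 2 := rfl
lemma cross3_apply2 (u v : V3) : cross3 u v 2 = u 0 * v 1 - u 1 * v 0 := rfl

lemma dot3_smul_left (a : ℝ) (u v : V3) : dot3 (a • u) v = a * dot3 u v := by
  simp only [dot3, smul3_apply]; ring

lemma dot3_smul_right (a : ℝ) (u v : V3) : dot3 u (a • v) = a * dot3 u v := by
  simp only [dot3, smul3_apply]; ring

lemma dot3_zero_left (v : V3) : dot3 0 v = 0 := by simp [dot3]

lemma dot3_cross_cyclic (u v w : V3) :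
    dot3 (cross3 u v) w = dot3 (cross3 w u) v := by
  simp only [dot3, cross3_apply0, cross3_apply1, cross3_apply2]; ring

lemma parallel_of_cross_eq_zero (u v : V3) (h : cross3 u v = 0) (hu : u ≠ 0) :
    v = (dot3 u v / dot3 u u) • u := by
  have h0 := congrFun h 0
  have h1 := congrFun h 1
  have h2 := congrFun h 2
  simp [cross3] at h0 h1 h2
  have hd := dot3_pos u hu
  have hne : dot3 u u ≠ 0 := ne_of_gt hd
  unfold dot3 at hne ⊢
  funext i
  fin_cases i
  · show v 0 = (_ / _) * u 0
    rw [div_mul_eq_mul_div, eq_div_iff hne]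
    linear_combination u 2 * h1 - u 1 * h2
  · show v 1 = (_ / _) * u 1
    rw [div_mul_eq_mul_div, eq_div_iff hne]
    linear_combination u 0 * h2 - u 2 * h0
  · show v 2 = (_ / _) * u 2
    rw [div_mul_eq_mul_div, eq_div_iff hne]
    linear_combination u 1 * h0 - u 0 * h1

/-! ### Calculus helpers -/

lemma contDiff_dot3 {n : WithTop ℕ∞} {f g : ℝ → V3} (hf : ContDiff ℝ n f)
    (hg : ContDiff ℝ n g) : ContDiff ℝ n (fun θ => dot3 (f θ) (g θ)) := by
  have hfi := fun i => (contDiff_pi.mp hf i)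
  have hgi := fun i => (contDiff_pi.mp hg i)
  exact (((hfi 0).mul (hgi 0)).add ((hfi 1).mul (hgi 1))).add ((hfi 2).mul (hgi 2))

lemma contDiff_cross3 {n : WithTop ℕ∞} {f g : ℝ → V3} (hf : ContDiff ℝ n f)
    (hg : ContDiff ℝ n g) : ContDiff ℝ n (fun θ => cross3 (f θ) (g θ)) := by
  have hfi := fun i => (contDiff_pi.mp hf i)
  have hgi := fun i => (contDiff_pi.mp hg i)
  apply contDiff_pi.mpr
  intro i
  fin_cases i
  · simp only [cross3_apply0]; exact ((hfi 1).mul (hgi 2)).sub ((hfi 2).mul (hgi 1))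
  · simp only [cross3_apply1]; exact ((hfi 2).mul (hgi 0)).sub ((hfi 0).mul (hgi 2))
  · simp only [cross3_apply2]; exact ((hfi 0).mul (hgi 1)).sub ((hfi 1).mul (hgi 0))

lemma contDiff_top_deriv {f : ℝ → V3} (hf : ContDiff ℝ (⊤ : ℕ∞) f) : ContDiff ℝ (⊤ : ℕ∞) (deriv f) := by
  have h : ContDiff ℝ (⊤ : ℕ∞) f := hf
  exact (contDiff_infty_iff_deriv.mp h).2

lemma hasDerivAt_dot3 {f g : ℝ → V3} {f' g' : V3} {x : ℝ}
    (hf : HasDerivAt f f' x) (hg : HasDerivAt g g' x) :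
    HasDerivAt (fun θ => dot3 (f θ) (g θ)) (dot3 f' (g x) + dot3 (f x) g') x := by
  have hfi := fun i => (hasDerivAt_pi.mp hf i)
  have hgi := fun i => (hasDerivAt_pi.mp hg i)
  have h := (((hfi 0).mul (hgi 0)).add ((hfi 1).mul (hgi 1))).add ((hfi 2).mul (hgi 2))
  exact h.congr_deriv (by unfold dot3; ring)

lemma deriv_periodic {T : ℝ} (f : ℝ → V3) (hf : Differentiable ℝ f)
    (hp : ∀ θ, f (θ + T) = f θ) (θ : ℝ) : deriv f (θ + T) = deriv f θ := by
  have hh : HasDerivAt (fun t : ℝ => t + T) 1 θ := (hasDerivAt_id θ).add_const T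
  have h1 : HasDerivAt (f ∘ fun t : ℝ => t + T) ((1:ℝ) • deriv f (θ + T)) θ :=
    HasDerivAt.scomp θ (hf (θ + T)).hasDerivAt hh
  have h2 : (f ∘ fun t : ℝ => t + T) = f := funext fun t => hp t
  rw [h2, one_smul] at h1
  exact (h1.deriv).symm

/-! ### Facts about an immersed curve -/

section Curve

variable {c : ℝ → V3} (hc : IsImmersed c)

lemma cd_smooth (hc : IsImmersed c) : ContDiff ℝ (⊤ : ℕ∞) (deriv c) := contDiff_top_deriv hc.1.1

lemma n_smooth (hc : IsImmersed c) : ContDiff ℝ (⊤ : ℕ∞) (fun θ => norm3 (deriv c θ)) := by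
  have := contDiff_dot3 (cd_smooth hc) (cd_smooth hc)
  exact this.sqrt (fun θ => ne_of_gt (dot3_pos _ (hc.2 θ)))

lemma n_pos (hc : IsImmersed c) (θ : ℝ) : 0 < norm3 (deriv c θ) := norm3_pos _ (hc.2 θ)

lemma T_smooth (hc : IsImmersed c) : ContDiff ℝ (⊤ : ℕ∞) (unitT c) := by
  have h1 : ContDiff ℝ (⊤ : ℕ∞) (fun θ => (norm3 (deriv c θ))⁻¹) :=
    (n_smooth hc).inv (fun θ => ne_of_gt (n_pos hc θ))
  exact h1.smul (cd_smooth hc)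

lemma cd_periodic (hc : IsImmersed c) (θ : ℝ) : deriv c (θ + 2 * π) = deriv c θ :=
  deriv_periodic c (hc.1.1.differentiable (by simp)) hc.1.2 θ

lemma T_periodic (hc : IsImmersed c) (θ : ℝ) : unitT c (θ + 2 * π) = unitT c θ := by
  unfold unitT Ds
  rw [cd_periodic hc]

lemma dot3_T_self (hc : IsImmersed c) (θ : ℝ) : dot3 (unitT c θ) (unitT c θ) = 1 := by
  unfold unitT Ds
  rw [dot3_smul_left, dot3_smul_right, ← norm3_sq]
  have := ne_of_gt (n_pos hc θ)
  field_simp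

lemma dot3_T_derivT (hc : IsImmersed c) (θ : ℝ) :
    dot3 (unitT c θ) (deriv (unitT c) θ) = 0 := by
  have hd : Differentiable ℝ (unitT c) := (T_smooth hc).differentiable (by simp)
  have h1 : HasDerivAt (fun θ => dot3 (unitT c θ) (unitT c θ))
      (dot3 (deriv (unitT c) θ) (unitT c θ) + dot3 (unitT c θ) (deriv (unitT c) θ)) θ :=
    hasDerivAt_dot3 (hd θ).hasDerivAt (hd θ).hasDerivAt
  have h2 : (fun θ => dot3 (unitT c θ) (unitT c θ)) = fun _ => (1:ℝ) :=
    funext fun θ => dot3_T_self hc θ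
  rw [h2] at h1
  have h3 := h1.unique (hasDerivAt_const θ 1)
  have h4 : dot3 (deriv (unitT c) θ) (unitT c θ) = dot3 (unitT c θ) (deriv (unitT c) θ) := by
    unfold dot3; ring
  rw [h4] at h3
  linarith

lemma dot3_cd_derivT (hc : IsImmersed c) (θ : ℝ) :
    dot3 (deriv c θ) (deriv (unitT c) θ) = 0 := by
  have h1 : dot3 (unitT c θ) (deriv (unitT c) θ)
      = (norm3 (deriv c θ))⁻¹ * dot3 (deriv c θ) (deriv (unitT c) θ) := by
    unfold unitT Ds; rw [dot3_smul_left]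
  have h2 := dot3_T_derivT hc θ
  rw [h1] at h2
  have h3 : (norm3 (deriv c θ))⁻¹ ≠ 0 := inv_ne_zero (ne_of_gt (n_pos hc θ))
  exact (mul_eq_zero.mp h2).resolve_left h3

lemma dot3_cd_T (hc : IsImmersed c) (θ : ℝ) :
    dot3 (deriv c θ) (unitT c θ) = norm3 (deriv c θ) := by
  unfold unitT Ds
  rw [dot3_smul_right, ← norm3_sq]
  have := ne_of_gt (n_pos hc θ)
  field_simp

/-- The key integration-by-parts identity: `∫ ⟨c, T'⟩ = -ℓ`. -/
lemma integral_c_derivT (hc : IsImmersed c) :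
    (∫ θ in (0:ℝ)..(2 * π), dot3 (c θ) (deriv (unitT c) θ)) = - curveLen c := by
  have hcd : Differentiable ℝ c := hc.1.1.differentiable (by simp)
  have hTd : Differentiable ℝ (unitT c) := (T_smooth hc).differentiable (by simp)
  have hder : ∀ x ∈ Set.uIcc (0:ℝ) (2 * π),
      HasDerivAt (fun θ => dot3 (c θ) (unitT c θ))
        (dot3 (deriv c x) (unitT c x) + dot3 (c x) (deriv (unitT c) x)) x :=
    fun x _ => hasDerivAt_dot3 (hcd x).hasDerivAt (hTd x).hasDerivAt
  have hcont1 : Continuous (fun θ => dot3 (deriv c θ) (unitT c θ)) :=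
    (contDiff_dot3 (cd_smooth hc) (T_smooth hc)).continuous
  have hcont2 : Continuous (fun θ => dot3 (c θ) (deriv (unitT c) θ)) :=
    (contDiff_dot3 hc.1.1 (contDiff_top_deriv (T_smooth hc))).continuous
  have hint : IntervalIntegrable
      (fun x => dot3 (deriv c x) (unitT c x) + dot3 (c x) (deriv (unitT c) x))
      MeasureTheory.volume 0 (2 * π) :=
    (hcont1.add hcont2).intervalIntegrable _ _
  have hfund := intervalIntegral.integral_eq_sub_of_hasDerivAt hder hint
  have hper : dot3 (c (2 * π)) (unitT c (2 * π)) = dot3 (c 0) (unitT c 0) := by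
    have := hc.1.2 0
    have h2 := T_periodic hc 0
    rw [zero_add] at this h2
    rw [this, h2]
  rw [hper, sub_self] at hfund
  have hsplit := intervalIntegral.integral_add (hcont1.intervalIntegrable (μ := MeasureTheory.volume) 0 (2*π)) (hcont2.intervalIntegrable (μ := MeasureTheory.volume) 0 (2*π))
  rw [hsplit] at hfund
  have hlen : (∫ θ in (0:ℝ)..(2 * π), dot3 (deriv c θ) (unitT c θ)) = curveLen c := by
    unfold curveLen
    apply intervalIntegral.integral_congr
    intro θ _
    exact dot3_cd_T hc θ

  linarith [hfund, hlen]

/-- `arcInt c ⟨f, D_s²c⟩ = ∫ ⟨f, T'⟩`. -/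
lemma arcInt_dot_Ds2c (hc : IsImmersed c) (f : ℝ → V3) :
    arcInt c (fun θ => dot3 (f θ) (Ds2c c θ))
      = ∫ θ in (0:ℝ)..(2 * π), dot3 (f θ) (deriv (unitT c) θ) := by
  unfold arcInt
  apply intervalIntegral.integral_congr
  intro θ _
  show dot3 (f θ) (Ds2c c θ) * norm3 (deriv c θ) = _
  unfold Ds2c Ds
  have h1 : (fun θ => (norm3 (deriv c θ))⁻¹ • deriv c θ) = unitT c := rfl
  rw [h1, dot3_smul_right]
  have := ne_of_gt (n_pos hc θ)
  field_simp

lemma arcInt_c_Ds2c (hc : IsImmersed c) :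
    arcInt c (fun θ => dot3 (c θ) (Ds2c c θ)) = - curveLen c := by
  rw [arcInt_dot_Ds2c hc c, integral_c_derivT hc]

lemma Theta_c_c (hc : IsImmersed c) : Theta c c = 0 := by
  unfold Theta
  have : ∀ θ ∈ Set.uIcc (0:ℝ) (2*π),
      dot3 (cross3 (c θ) (deriv c θ)) (c θ) = (fun _ : ℝ => (0:ℝ)) θ := by
    intro θ _
    simp only [dot3, cross3_apply0, cross3_apply1, cross3_apply2]; ring
  rw [intervalIntegral.integral_congr this]
  simp

end Curve

lemma dot3_add_left (u v w : V3) : dot3 (u + v) w = dot3 u w + dot3 v w := by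
  simp only [dot3, Pi.add_apply]; ring

/-- when `3Φ(ℓ) + Φ'(ℓ)ℓ ≠ 0`, the kernel of the length-weighted
presymplectic form at `c` consists exactly of the vertical vectors. -/
theorem length_weighted_kernel_nondegenerate (c : ℝ → V3) (p q : ℝ)
    (hc : IsImmersed c) (hp : 0 < p) (hne : 3 * p + q * curveLen c ≠ 0) :
    ∀ h, IsDirection h →
      ((∀ k, IsDirection k → OmegaPhi c p q h k = 0) ↔
        ∀ θ, cross3 (deriv c θ) (h θ) = 0) := by
  intro h hh
  have h2π : (0:ℝ) < 2*π := by positivity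
  constructor
  · -- forward direction
    intro hker
    -- Step A : Theta c h = 0
    have hdirc : IsDirection c := ⟨hc.1.1, hc.1.2⟩
    have hI1 : (∫ θ in (0:ℝ)..(2*π), dot3 (cross3 (deriv c θ) (h θ)) (c θ)) = Theta c h := by
      unfold Theta
      apply intervalIntegral.integral_congr
      intro θ _
      exact dot3_cross_cyclic _ _ _
    have hΩc := hker c hdirc
    have hfact : OmegaPhi c p q h c = (3*p + q*curveLen c) * Theta c h := by
      unfold OmegaPhi
      rw [hI1, arcInt_c_Ds2c hc, Theta_c_c hc]; ring
    have hTh : Theta c h = 0 := by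
      rw [hΩc] at hfact
      exact (mul_eq_zero.mp hfact.symm).resolve_left hne
    -- Step B : pointwise Euler-Lagrange identity
    set A := arcInt c (fun θ => dot3 (h θ) (Ds2c c θ)) with hA
    set a := q * A with ha
    set G := fun θ => (3*p) • cross3 (deriv c θ) (h θ) + a • cross3 (c θ) (deriv c θ) with hG
    have hGsmooth : ContDiff ℝ (⊤ : ℕ∞) G :=
      ((contDiff_cross3 (cd_smooth hc) hh.1).const_smul (3*p)).add
        ((contDiff_cross3 hc.1.1 (cd_smooth hc)).const_smul a)
    have hGper : ∀ θ, G (θ + 2*π) = G θ := by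
      intro θ
      rw [hG]
      simp only
      rw [cd_periodic hc, hc.1.2, hh.2]
    have hΩG := hker G ⟨hGsmooth, hGper⟩
    have hcc1 : Continuous (fun θ => dot3 (cross3 (deriv c θ) (h θ)) (G θ)) :=
      (contDiff_dot3 (contDiff_cross3 (cd_smooth hc) hh.1) hGsmooth).continuous
    have hcc2 : Continuous (fun θ => dot3 (cross3 (c θ) (deriv c θ)) (G θ)) :=
      (contDiff_dot3 (contDiff_cross3 hc.1.1 (cd_smooth hc)) hGsmooth).continuous
    have hGG : ∀ θ ∈ Set.uIcc (0:ℝ) (2*π), dot3 (G θ) (G θ) =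
        3*p * dot3 (cross3 (deriv c θ) (h θ)) (G θ)
          + a * dot3 (cross3 (c θ) (deriv c θ)) (G θ) := by
      intro θ _
      show dot3 ((3*p) • cross3 (deriv c θ) (h θ) + a • cross3 (c θ) (deriv c θ)) (G θ) = _
      rw [dot3_add_left, dot3_smul_left, dot3_smul_left]
    have hIntGG : (∫ θ in (0:ℝ)..(2*π), dot3 (G θ) (G θ)) = 0 := by
      have hsplit : (∫ θ in (0:ℝ)..(2*π), dot3 (G θ) (G θ))
          = 3*p*(∫ θ in (0:ℝ)..(2*π), dot3 (cross3 (deriv c θ) (h θ)) (G θ))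
            + a*(∫ θ in (0:ℝ)..(2*π), dot3 (cross3 (c θ) (deriv c θ)) (G θ)) := by
        rw [intervalIntegral.integral_congr hGG,
          intervalIntegral.integral_add
            ((hcc1.intervalIntegrable _ _).const_mul (3*p))
            ((hcc2.intervalIntegrable _ _).const_mul a),
          intervalIntegral.integral_const_mul, intervalIntegral.integral_const_mul]
      have hOm : OmegaPhi c p q h G
          = 3*p*(∫ θ in (0:ℝ)..(2*π), dot3 (cross3 (deriv c θ) (h θ)) (G θ))
            + a*(∫ θ in (0:ℝ)..(2*π), dot3 (cross3 (c θ) (deriv c θ)) (G θ)) := by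
        unfold OmegaPhi
        rw [hTh]
        show _ + q * (A * Theta c G - _ * 0) = _
        unfold Theta
        ring
      rw [hsplit, ← hOm]
      exact hΩG
    have hGGcont : Continuous (fun θ => dot3 (G θ) (G θ)) :=
      (contDiff_dot3 hGsmooth hGsmooth).continuous
    have hG0 : ∀ θ, G θ = 0 := by
      have hae := (intervalIntegral.integral_eq_zero_iff_of_le_of_nonneg_ae (le_of_lt h2π)
        (Filter.Eventually.of_forall (fun θ => dot3_nonneg (G θ)))
        (hGGcont.intervalIntegrable _ _)).mp hIntGG
      have heq : Set.EqOn (fun θ => dot3 (G θ) (G θ)) 0 (Set.Ioc 0 (2*π)) := by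
        apply MeasureTheory.Measure.eqOn_of_ae_eq hae hGGcont.continuousOn continuousOn_const
        rw [interior_Ioc, closure_Ioo (ne_of_lt h2π)]
        exact Set.Ioc_subset_Icc_self
      have hzero : ∀ θ ∈ Set.Ioc (0:ℝ) (2*π), G θ = 0 := by
        intro θ hθ
        have h1 := heq hθ
        exact (dot3_eq_zero_iff (G θ)).mp h1
      intro θ
      obtain ⟨y, hy, hGy⟩ := Function.Periodic.exists_mem_Ioc hGper h2π θ 0
      rw [hGy]
      exact hzero y (by rwa [zero_add] at hy)
    -- Step C : conclude
    have hp3 : (3:ℝ)*p ≠ 0 := ne_of_gt (by positivity)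
    set m := a / (3*p) with hm
    have hcross : ∀ θ, cross3 (deriv c θ) (h θ - m • c θ) = 0 := by
      intro θ
      have hGθ := hG0 θ
      rw [hG] at hGθ
      simp only at hGθ
      have hGi0 := congrFun hGθ 0
      have hGi1 := congrFun hGθ 1
      have hGi2 := congrFun hGθ 2
      simp only [Pi.add_apply, smul3_apply, cross3_apply0, cross3_apply1, cross3_apply2,
        Pi.zero_apply] at hGi0 hGi1 hGi2
      funext i
      fin_cases i
      · show cross3 (deriv c θ) (h θ - m • c θ) 0 = 0
        rw [cross3_apply0]
        simp only [Pi.sub_apply, smul3_apply]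
        rw [hm]
        field_simp
        linear_combination hGi0
      · show cross3 (deriv c θ) (h θ - m • c θ) 1 = 0
        rw [cross3_apply1]
        simp only [Pi.sub_apply, smul3_apply]
        rw [hm]
        field_simp
        linear_combination hGi1
      · show cross3 (deriv c θ) (h θ - m • c θ) 2 = 0
        rw [cross3_apply2]
        simp only [Pi.sub_apply, smul3_apply]
        rw [hm]
        field_simp
        linear_combination hGi2
    have hA_eq : A = m * (- curveLen c) := by
      rw [hA, arcInt_dot_Ds2c hc h]
      have hpt : ∀ θ ∈ Set.uIcc (0:ℝ) (2*π), dot3 (h θ) (deriv (unitT c) θ)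
          = m * dot3 (c θ) (deriv (unitT c) θ) := by
        intro θ _
        have hw := parallel_of_cross_eq_zero _ _ (hcross θ) (hc.2 θ)
        have hsplit : h θ = (h θ - m • c θ) + m • c θ := by abel
        rw [hsplit, hw, dot3_add_left, dot3_smul_left, dot3_smul_left,
          dot3_cd_derivT hc, mul_zero, zero_add]
      rw [intervalIntegral.integral_congr hpt, intervalIntegral.integral_const_mul,
        integral_c_derivT hc]
    have hmul : m * (3*p) = a := by rw [hm]; field_simp
    have hm0 : m = 0 := by
      have h2 : a = q * (m * (- curveLen c)) := by rw [ha, hA_eq]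
      have h3 : m * (3 * p + q * curveLen c) = 0 := by linear_combination hmul + h2
      exact (mul_eq_zero.mp h3).resolve_right hne
    have ha0 : a = 0 := by rw [← hmul, hm0, zero_mul]
    intro θ
    have hGθ := hG0 θ
    rw [hG] at hGθ
    simp only at hGθ
    rw [ha0] at hGθ
    funext i
    have hGi := congrFun hGθ i
    simp only [Pi.add_apply, smul3_apply, Pi.zero_apply, zero_mul, add_zero] at hGi
    have : cross3 (deriv c θ) (h θ) i = 0 := by
      rcases mul_eq_zero.mp hGi with h1 | h1
      · exact absurd h1 hp3
      · exact h1
    simpa using this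
  · -- reverse direction
    intro hz k hk
    have hTh : Theta c h = 0 := by
      unfold Theta
      have heq : ∀ θ ∈ Set.uIcc (0:ℝ) (2*π),
          dot3 (cross3 (c θ) (deriv c θ)) (h θ) = (fun _ : ℝ => (0:ℝ)) θ := by
        intro θ _
        rw [dot3_cross_cyclic, dot3_cross_cyclic, hz θ, dot3_zero_left]
      rw [intervalIntegral.integral_congr heq]
      simp
    have hAh : arcInt c (fun θ => dot3 (h θ) (Ds2c c θ)) = 0 := by
      rw [arcInt_dot_Ds2c hc h]
      have heq : ∀ θ ∈ Set.uIcc (0:ℝ) (2*π),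
          dot3 (h θ) (deriv (unitT c) θ) = (fun _ : ℝ => (0:ℝ)) θ := by
        intro θ _
        have hpar := parallel_of_cross_eq_zero _ _ (hz θ) (hc.2 θ)
        rw [hpar, dot3_smul_left, dot3_cd_derivT hc, mul_zero]
      rw [intervalIntegral.integral_congr heq]
      simp
    have hI : (∫ θ in (0:ℝ)..(2*π), dot3 (cross3 (deriv c θ) (h θ)) (k θ)) = 0 := by
      have heq : ∀ θ ∈ Set.uIcc (0:ℝ) (2*π),
          dot3 (cross3 (deriv c θ) (h θ)) (k θ) = (fun _ : ℝ => (0:ℝ)) θ := by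
        intro θ _
        rw [hz θ, dot3_zero_left]
      rw [intervalIntegral.integral_congr heq]
      simp
    unfold OmegaPhi
    rw [hI, hTh, hAh]
    ring
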